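/- Let 𝒫 be a transitive provability model satisfying local soundness (T_w ⊢ A implies 𝒫, w ⊩ A, for all w and A) and local completeness (𝒫, w ⊩⁺ A implies T_w ⊢ A, for all ⊏-accessible w and all A, not only purely modal). Then the underlying Kripke model 𝒦 = (W, ⊏, V) is equivalent to 𝒫: for all w ∈ W and all modal formulas A, 𝒫, w ⊩ A iff 𝒦, w ⊨ A. -/

import Mathlib

/-- Formulas of the modal language with atoms, ⊥, → and □. -/
inductive Fml : Type
  | atom : ℕ → Fml
  | bot  : Fml
  | imp  : Fml → Fml → Fml
  | box  : Fml → Fml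
deriving DecidableEq

/-- Classical Boolean evaluation where boxed formulas behave like atoms:
the valuation `v` is queried on atoms and on boxed formulas. -/
def evalCL (v : Fml → Bool) : Fml → Bool
  | .atom n => v (.atom n)
  | .bot => false
  | .imp A B => !(evalCL v A) || evalCL v B
  | .box A => v (.box A)

/-- Classical tautology over the modal language (□-formulas act as atoms). -/
def Taut (A : Fml) : Prop := ∀ v, evalCL v A = true

/-- A formula is purely modal if every atom is in the scope of some □. -/
def PurelyModal : Fml → Prop
  | .atom _ => False
  | .bot => True
  | .imp A B => PurelyModal A ∧ PurelyModal B
  | .box _ => True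

/-- A provability pre-model: a frame, a theory (given by its set of
derivable formulas) at each world, and a valuation. -/
structure PModel (W : Type*) where
  R : W → W → Prop
  T : W → Set Fml
  V : W → ℕ → Prop

/-- Forcing in a provability pre-model. -/
def pforce {W : Type*} (P : PModel W) : W → Fml → Prop
  | w, .atom n => P.V w n
  | _, .bot => False
  | w, .imp A B => pforce P w A → pforce P w B
  | w, .box A => ∀ u, P.R w u → A ∈ P.T u

/-- `𝒫, w ⊩⁺ A` iff some predecessor `u ⊏ w` has `𝒫, v ⊩ A` for all `v ⊐⁺ u`. -/
def pforcePlus {W : Type*} (P : PModel W) (w : W) (A : Fml) : Prop :=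
  ∃ u, P.R u w ∧ ∀ v, Relation.TransGen P.R u v → pforce P v A

/-- A world is ⊏-accessible if it has a ⊏-predecessor. -/
def Accessible {W : Type*} (P : PModel W) (w : W) : Prop := ∃ v, P.R v w

/-- A classical theory: contains all classical tautologies and is closed
under modus ponens. -/
def IsClassicalTheory (T : Set Fml) : Prop :=
  (∀ A, Taut A → A ∈ T) ∧ (∀ A B, Fml.imp A B ∈ T → A ∈ T → B ∈ T)

/-- Provability model: classical theories at accessible worlds and modal
completeness. -/
def IsPModel {W : Type*} (P : PModel W) : Prop :=
  (∀ w, Accessible P w → IsClassicalTheory (P.T w)) ∧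
  (∀ w A, PurelyModal A → pforcePlus P w A → A ∈ P.T w)

/-- A Kripke model. -/
structure KModel (W : Type*) where
  R : W → W → Prop
  V : W → ℕ → Prop

/-- Kripke forcing. -/
def kforce {W : Type*} (K : KModel W) : W → Fml → Prop
  | w, .atom n => K.V w n
  | _, .bot => False
  | w, .imp A B => kforce K w A → kforce K w B
  | w, .box A => ∀ u, K.R w u → kforce K u A

namespace PModel

variable {W : Type*} (P : PModel W)

/-- For the converse direction, `w` itself witnesses `𝒫, u ⊩⁺ A` at each successor `u`:
transitivity collapses `⊏⁺` to `⊏`. -/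
theorem pforce_box_iff [IsTrans W P.R]
    (hsound : ∀ w A, A ∈ P.T w → pforce P w A)
    (hcomplete : ∀ w A, pforcePlus P w A → A ∈ P.T w) (w : W) (A : Fml) :
    pforce P w (.box A) ↔ ∀ u, P.R w u → pforce P u A := by
  refine ⟨fun h u hwu => hsound u A (h u hwu), fun h u hwu => hcomplete u A ⟨w, hwu, ?_⟩⟩
  intro v hwv
  rw [Relation.transGen_eq_self] at hwv
  exact h v hwv

end PModel

theorem provability_model_eq_kripke_general {W : Type*} (P : PModel W)
    (htrans : Transitive P.R)
    (hsound : ∀ w A, A ∈ P.T w → pforce P w A)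
    (hcomplete : ∀ w A, pforcePlus P w A → A ∈ P.T w) :
    ∀ w A, pforce P w A ↔ kforce ⟨P.R, P.V⟩ w A := by
  have : IsTrans W P.R := ⟨htrans⟩
  intro w A
  induction A generalizing w with
  | atom n => rfl
  | bot => rfl
  | imp A B ihA ihB => simp only [pforce, kforce, ihA, ihB]
  | box A ih =>
    rw [P.pforce_box_iff hsound hcomplete]
    simp only [kforce, ih]

/-- A transitive provability model with local soundness and local
completeness is equivalent to its underlying Kripke model. -/
theorem provability_model_eq_kripke {W : Type*} (P : PModel W)
    (hP : IsPModel P) (htrans : Transitive P.R)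
    (hsound : ∀ w A, A ∈ P.T w → pforce P w A)
    (hcomplete : ∀ w A, pforcePlus P w A → A ∈ P.T w) :
    ∀ w A, pforce P w A ↔ kforce ⟨P.R, P.V⟩ w A :=
  provability_model_eq_kripke_general P htrans hsound hcomplete
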